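/- arXiv:1006.3902 — 5 statements merged into one kernel-verified Lean document; each statement's English description precedes it below -/
import Mathlib

section
/- Let μ₁, μ₂ be finitely supported idempotent probability measures on X with representations μ_i(φ) = max_{1≤j≤n_i}(λ_{ij} + φ(x_{ij})) (i = 1, 2), where the indexing is chosen so that λ_{11} = λ_{21} = 0. Then the functional ξ⁰ on C(X × X, ℝ) defined by ξ⁰(Φ) = max{ Φ(x_{11}, x_{21}), max_{2≤t≤n₂}(λ_{2t} + Φ(x_{11}, x_{2t})), max_{2≤t≤n₁}(λ_{1t} + Φ(x_{1t}, x_{21})) } is an idempotent probability measure on X × X and is a coupling of μ₁ and μ₂; in particular, the set Λ(μ₁, μ₂) of couplings is nonempty. -/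
open Filter Topology

variable {X : Type*}

/-- An idempotent probability measure on a topological space `X`:
a functional on `C(X, ℝ)` preserving constants, shifting by constants,
and turning pointwise max into max. -/
def IsIPM [TopologicalSpace X] (μ : C(X, ℝ) → ℝ) : Prop :=
  (∀ c : ℝ, μ (ContinuousMap.const X c) = c) ∧
  (∀ (φ : C(X, ℝ)) (c : ℝ), μ (φ + ContinuousMap.const X c) = μ φ + c) ∧
  (∀ φ ψ : C(X, ℝ), μ (φ ⊔ ψ) = max (μ φ) (μ ψ))

/-- `μ` is represented as `μ(φ) = max_i (λ i + φ (x i))` with `x` pairwise distinct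
and `max_i λ i = 0`. -/
def IsRepr [TopologicalSpace X] (μ : C(X, ℝ) → ℝ) {n : ℕ}
    (x : Fin n → X) (lam : Fin n → ℝ) : Prop :=
  0 < n ∧ Function.Injective x ∧ (⨆ i, lam i) = 0 ∧
    ∀ φ : C(X, ℝ), μ φ = ⨆ i, (lam i + φ (x i))

/-- A finitely supported idempotent probability measure. -/
def IsFinSuppIPM [TopologicalSpace X] (μ : C(X, ℝ) → ℝ) : Prop :=
  ∃ (n : ℕ) (x : Fin n → X) (lam : Fin n → ℝ), IsRepr μ x lam

/-- `ξ` is a coupling of `μ1` and `μ2`: an idempotent probability measure on `X × X`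
whose marginals are `μ1` and `μ2`. -/
def IsCoupling [TopologicalSpace X] (μ1 μ2 : C(X, ℝ) → ℝ)
    (ξ : C(X × X, ℝ) → ℝ) : Prop :=
  IsIPM ξ ∧
  (∀ φ : C(X, ℝ), ξ (φ.comp ContinuousMap.fst) = μ1 φ) ∧
  (∀ φ : C(X, ℝ), ξ (φ.comp ContinuousMap.snd) = μ2 φ)

/-- A coupling matrix for weight vectors `lam1`, `lam2`: entries in `ℝ ∪ {−∞}`,
with row maxima `lam1` and column maxima `lam2`. -/
def IsCouplingMatrix {n1 n2 : ℕ} (lam1 : Fin n1 → ℝ) (lam2 : Fin n2 → ℝ)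
    (γ : Fin n1 → Fin n2 → WithBot ℝ) : Prop :=
  (∀ j, (Finset.univ.sup fun k => γ j k) = (lam1 j : WithBot ℝ)) ∧
  (∀ k, (Finset.univ.sup fun j => γ j k) = (lam2 k : WithBot ℝ))

/-- The cost `max{ |λ_{2k} − λ_{1j}| + ρ(x_{1j}, x_{2k}) : γ_{jk} ≠ −∞ }`. -/
noncomputable def matCost [MetricSpace X] {n1 n2 : ℕ}
    (x1 : Fin n1 → X) (lam1 : Fin n1 → ℝ) (x2 : Fin n2 → X) (lam2 : Fin n2 → ℝ)
    (γ : Fin n1 → Fin n2 → WithBot ℝ) : ℝ :=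
  sSup {c : ℝ | ∃ j k, γ j k ≠ ⊥ ∧ c = |lam2 k - lam1 j| + dist (x1 j) (x2 k)}

/-- `H(μ1, μ2)`: the infimum of costs over all coupling matrices
(for all representations of `μ1`, `μ2`; the representation is unique). -/
noncomputable def Hdist [MetricSpace X] (μ1 μ2 : C(X, ℝ) → ℝ) : ℝ :=
  sInf {c : ℝ | ∃ (n1 n2 : ℕ) (x1 : Fin n1 → X) (lam1 : Fin n1 → ℝ)
      (x2 : Fin n2 → X) (lam2 : Fin n2 → ℝ) (γ : Fin n1 → Fin n2 → WithBot ℝ),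
      IsRepr μ1 x1 lam1 ∧ IsRepr μ2 x2 lam2 ∧ IsCouplingMatrix lam1 lam2 γ ∧
      c = matCost x1 lam1 x2 lam2 γ}

/-- `ρ_ω(μ1, μ2) = min{diam X, H(μ1, μ2)}`. -/
noncomputable def rhoOmega [MetricSpace X] (μ1 μ2 : C(X, ℝ) → ℝ) : ℝ :=
  min (Metric.diam (Set.univ : Set X)) (Hdist μ1 μ2)


lemma fin_ciSup_add_const {ι : Type*} [Nonempty ι] [Finite ι] (f : ι → ℝ) (c : ℝ) :
    (⨆ i, (f i + c)) = (⨆ i, f i) + c :=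
  (ciSup_add (Set.finite_range f).bddAbove c).symm

lemma fin_ciSup_max {ι : Type*} [Nonempty ι] [Finite ι] (f g : ι → ℝ) :
    (⨆ i, max (f i) (g i)) = max (⨆ i, f i) (⨆ i, g i) := by
  apply le_antisymm
  · exact ciSup_le fun i => max_le_max (le_ciSup (Set.finite_range f).bddAbove i)
      (le_ciSup (Set.finite_range g).bddAbove i)
  · exact max_le
      (ciSup_mono (Set.finite_range _).bddAbove fun i => le_max_left _ _)
      (ciSup_mono (Set.finite_range _).bddAbove fun i => le_max_right _ _)

/-- the functional ξ⁰ is a coupling of μ₁, μ₂; in particular couplings exist.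
(Since `lam1 0 = lam2 0 = 0`, the suprema over all indices below coincide with the
paper's formula, where the first term is listed separately and `t` ranges from `2`.) -/
theorem stmt0 [MetricSpace X] [CompactSpace X]
    (μ1 μ2 : C(X, ℝ) → ℝ) {n1 n2 : ℕ}
    (x1 : Fin n1 → X) (lam1 : Fin n1 → ℝ) (x2 : Fin n2 → X) (lam2 : Fin n2 → ℝ)
    (hn1 : 0 < n1) (hn2 : 0 < n2)
    (h1 : IsRepr μ1 x1 lam1) (h2 : IsRepr μ2 x2 lam2)
    (hl1 : lam1 ⟨0, hn1⟩ = 0) (hl2 : lam2 ⟨0, hn2⟩ = 0) :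
    IsCoupling μ1 μ2 (fun Φ : C(X × X, ℝ) =>
      max (Φ (x1 ⟨0, hn1⟩, x2 ⟨0, hn2⟩))
        (max (⨆ t : Fin n2, (lam2 t + Φ (x1 ⟨0, hn1⟩, x2 t)))
             (⨆ t : Fin n1, (lam1 t + Φ (x1 t, x2 ⟨0, hn2⟩))))) ∧
    ∃ ξ : C(X × X, ℝ) → ℝ, IsCoupling μ1 μ2 ξ:= by
  haveI i1 : Nonempty (Fin n1) := ⟨⟨0, hn1⟩⟩
  haveI i2 : Nonempty (Fin n2) := ⟨⟨0, hn2⟩⟩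
  set A : X := x1 ⟨0, hn1⟩ with hA
  set B : X := x2 ⟨0, hn2⟩ with hB
  have bdd : ∀ {n : ℕ} (f : Fin n → ℝ), BddAbove (Set.range f) :=
    fun f => (Set.finite_range f).bddAbove
  -- the first term is dominated by the second sup
  have hfirst : ∀ Φ : C(X × X, ℝ),
      Φ (A, B) ≤ ⨆ t : Fin n2, (lam2 t + Φ (A, x2 t)) := by
    intro Φ
    have := le_ciSup (bdd fun t : Fin n2 => lam2 t + Φ (A, x2 t)) ⟨0, hn2⟩
    simpa [hl2] using this
  have key : IsCoupling μ1 μ2 (fun Φ : C(X × X, ℝ) =>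
      max (Φ (A, B))
        (max (⨆ t : Fin n2, (lam2 t + Φ (A, x2 t)))
             (⨆ t : Fin n1, (lam1 t + Φ (x1 t, B))))) := by
    have collapse : ∀ Φ : C(X × X, ℝ),
        max (Φ (A, B))
          (max (⨆ t : Fin n2, (lam2 t + Φ (A, x2 t)))
               (⨆ t : Fin n1, (lam1 t + Φ (x1 t, B)))) =
        max (⨆ t : Fin n2, (lam2 t + Φ (A, x2 t)))
            (⨆ t : Fin n1, (lam1 t + Φ (x1 t, B))) := by
      intro Φ
      exact max_eq_right (le_trans (hfirst Φ) (le_max_left _ _))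
    refine ⟨⟨?_, ?_, ?_⟩, ?_, ?_⟩
    · -- constants
      intro c
      have e2 : (⨆ t : Fin n2, (lam2 t + (ContinuousMap.const (X × X) c) (A, x2 t))) = c := by
        simp only [ContinuousMap.const_apply]
        rw [fin_ciSup_add_const, h2.2.2.1, zero_add]
      have e1 : (⨆ t : Fin n1, (lam1 t + (ContinuousMap.const (X × X) c) (x1 t, B))) = c := by
        simp only [ContinuousMap.const_apply]
        rw [fin_ciSup_add_const, h1.2.2.1, zero_add]
      beta_reduce
      rw [collapse, e1, e2, max_self]
    · -- shift by constant
      intro Φ c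
      beta_reduce
      rw [collapse, collapse]
      have e2 : (⨆ t : Fin n2, (lam2 t + (Φ + ContinuousMap.const (X × X) c) (A, x2 t))) =
          (⨆ t : Fin n2, (lam2 t + Φ (A, x2 t))) + c := by
        rw [← fin_ciSup_add_const]
        simp [add_assoc]
      have e1 : (⨆ t : Fin n1, (lam1 t + (Φ + ContinuousMap.const (X × X) c) (x1 t, B))) =
          (⨆ t : Fin n1, (lam1 t + Φ (x1 t, B))) + c := by
        rw [← fin_ciSup_add_const]
        simp [add_assoc]
      rw [e1, e2, max_add_add_right]
    · -- max
      intro Φ Ψ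
      beta_reduce
      rw [collapse, collapse, collapse]
      have e2 : (⨆ t : Fin n2, (lam2 t + (Φ ⊔ Ψ) (A, x2 t))) =
          max (⨆ t : Fin n2, (lam2 t + Φ (A, x2 t))) (⨆ t : Fin n2, (lam2 t + Ψ (A, x2 t))) := by
        rw [← fin_ciSup_max]
        congr 1; funext t
        simp [max_add_add_left]
      have e1 : (⨆ t : Fin n1, (lam1 t + (Φ ⊔ Ψ) (x1 t, B))) =
          max (⨆ t : Fin n1, (lam1 t + Φ (x1 t, B))) (⨆ t : Fin n1, (lam1 t + Ψ (x1 t, B))) := by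
        rw [← fin_ciSup_max]
        congr 1; funext t
        simp [max_add_add_left]
      rw [e1, e2, max_max_max_comm]
    · -- first marginal
      intro φ
      beta_reduce
      rw [collapse]
      have e2 : (⨆ t : Fin n2, (lam2 t + (φ.comp ContinuousMap.fst) (A, x2 t))) = φ A := by
        simp only [ContinuousMap.comp_apply, ContinuousMap.fst_apply]
        rw [fin_ciSup_add_const, h2.2.2.1, zero_add]
      have e1 : (⨆ t : Fin n1, (lam1 t + (φ.comp ContinuousMap.fst) (x1 t, B))) = μ1 φ := by
        simp only [ContinuousMap.comp_apply, ContinuousMap.fst_apply]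
        exact (h1.2.2.2 φ).symm
      have hle : φ A ≤ μ1 φ := by
        rw [h1.2.2.2 φ]
        have := le_ciSup (bdd fun t : Fin n1 => lam1 t + φ (x1 t)) ⟨0, hn1⟩
        simpa [hl1, ← hA] using this
      rw [e1, e2, max_eq_right hle]
    · -- second marginal
      intro φ
      beta_reduce
      rw [collapse]
      have e2 : (⨆ t : Fin n2, (lam2 t + (φ.comp ContinuousMap.snd) (A, x2 t))) = μ2 φ := by
        simp only [ContinuousMap.comp_apply, ContinuousMap.snd_apply]
        exact (h2.2.2.2 φ).symm
      have e1 : (⨆ t : Fin n1, (lam1 t + (φ.comp ContinuousMap.snd) (x1 t, B))) = φ B := by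
        simp only [ContinuousMap.comp_apply, ContinuousMap.snd_apply]
        rw [fin_ciSup_add_const, h1.2.2.1, zero_add]
      have hle : φ B ≤ μ2 φ := by
        rw [h2.2.2.2 φ]
        have := le_ciSup (bdd fun t : Fin n2 => lam2 t + φ (x2 t)) ⟨0, hn2⟩
        simpa [hl2, ← hB] using this
      rw [e1, e2, max_eq_left hle]
  exact ⟨key, ⟨_, key⟩⟩
end

section
/- Let μ₁, μ₂ be finitely supported idempotent probability measures on X with representations μ_i(φ) = max_{1≤j≤n_i}(λ_{ij} + φ(x_{ij})) (i = 1, 2), where λ_{11} = λ_{21} = 0, and let ξ⁰(Φ) = max{ Φ(x_{11}, x_{21}), max_{2≤t≤n₂}(λ_{2t} + Φ(x_{11}, x_{2t})), max_{2≤t≤n₁}(λ_{1t} + Φ(x_{1t}, x_{21})) }. Then for any subsets K ⊆ {2, …, n₁}, M ⊆ {2, …, n₂} and any choice of real numbers γ_{km} ≤ min{λ_{1k}, λ_{2m}} for k ∈ K, m ∈ M, the functional ξ(Φ) = max{ ξ⁰(Φ), max_{k∈K, m∈M}(γ_{km} + Φ(x_{1k}, x_{2m})) } is an idempotent probability measure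 on X × X and is a coupling of μ₁ and μ₂. -/
open Filter Topology

variable {X : Type*}

/-!
The functional `ξ` is the max-plus functional `Φ ↦ max_{(j,k) ∈ T} (W j k + Φ (x_{1j}, x_{2k}))`
of a weight matrix `W` supported on the first row, the first column and `K × M`. Every such
functional whose weights have maximum `0` is an idempotent probability measure, and when the row
maxima of `W` are the `λ_{1j}` and its column maxima are the `λ_{2k}`, projecting to a coordinate
collapses each row (column) to its maximum, so the marginals are `μ₁` and `μ₂`. The constraint
`γ_{km} ≤ min{λ_{1k}, λ_{2m}}` is exactly what keeps these row and column maxima unchanged.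
-/

open Finset

theorem Finset.sup'_sup {ι α : Type*} [SemilatticeSup α] (s : Finset ι) (hs : s.Nonempty)
    (f g : ι → α) : s.sup' hs (fun i => f i ⊔ g i) = s.sup' hs f ⊔ s.sup' hs g :=
  le_antisymm (sup'_le _ _ fun _ hi => sup_le_sup (le_sup' f hi) (le_sup' g hi))
    (sup_le (sup'_mono_fun fun _ _ => le_sup_left) (sup'_mono_fun fun _ _ => le_sup_right))

theorem Finset.sup'_eq_sup'_of_forall_exists_le {ι κ α : Type*} [SemilatticeSup α]
    {s : Finset ι} {t : Finset κ} (hs : s.Nonempty) (ht : t.Nonempty) {f : ι → α} {g : κ → α}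
    (hfg : ∀ i ∈ s, ∃ j ∈ t, f i ≤ g j) (hgf : ∀ j ∈ t, ∃ i ∈ s, g j ≤ f i) :
    s.sup' hs f = t.sup' ht g := by
  refine le_antisymm (sup'_le _ _ fun i hi => ?_) (sup'_le _ _ fun j hj => ?_)
  · obtain ⟨j, hj, hij⟩ := hfg i hi
    exact le_sup'_of_le g hj hij
  · obtain ⟨i, hi, hji⟩ := hgf j hj
    exact le_sup'_of_le f hi hji

theorem IsRepr.le_zero [TopologicalSpace X] {μ : C(X, ℝ) → ℝ} {n : ℕ}
    {x : Fin n → X} {lam : Fin n → ℝ} (h : IsRepr μ x lam) (i : Fin n) : lam i ≤ 0 :=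
  h.2.2.1 ▸ le_ciSup (Set.finite_range lam).bddAbove i

section MaxPlus

variable {ι Y : Type*} [TopologicalSpace Y]

def maxPlus (T : Finset ι) (hT : T.Nonempty) (w : ι → ℝ) (p : ι → Y) (Φ : C(Y, ℝ)) : ℝ :=
  T.sup' hT fun i => w i + Φ (p i)

theorem isIPM_maxPlus {T : Finset ι} (hT : T.Nonempty) {w : ι → ℝ} (p : ι → Y)
    (hw : T.sup' hT w = 0) : IsIPM (maxPlus T hT w p) := by
  refine ⟨fun c => ?_, fun Φ c => ?_, fun Φ ψ => ?_⟩
  · simp only [maxPlus, ContinuousMap.const_apply]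
    rw [← sup'_add, hw, zero_add]
  · simp only [maxPlus, ContinuousMap.add_apply, ContinuousMap.const_apply, ← add_assoc]
    rw [sup'_add]
  · simp only [maxPlus, ContinuousMap.sup_apply, ← max_add_add_left]
    exact sup'_sup _ _ _ _

end MaxPlus

section CouplingMatrix

variable {ι κ : Type*}

/-- Entries of `W` outside `T` play the role of `-∞`, so the fields say that the row maxima of `W`
are `lam1` and its column maxima are `lam2`. -/
structure IsCouplingMatrixOn (lam1 : ι → ℝ) (lam2 : κ → ℝ) (T : Finset (ι × κ))
    (W : ι × κ → ℝ) : Prop where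
  le_fst : ∀ q ∈ T, W q ≤ lam1 q.1
  le_snd : ∀ q ∈ T, W q ≤ lam2 q.2
  exists_row : ∀ j, ∃ k, (j, k) ∈ T ∧ W (j, k) = lam1 j
  exists_col : ∀ k, ∃ j, (j, k) ∈ T ∧ W (j, k) = lam2 k

namespace IsCouplingMatrixOn

variable {lam1 : ι → ℝ} {lam2 : κ → ℝ} {T : Finset (ι × κ)} {W : ι × κ → ℝ}

theorem sup'_add_fst [Fintype ι] (hW : IsCouplingMatrixOn lam1 lam2 T W) (hT : T.Nonempty)
    (f : ι → ℝ) : T.sup' hT (fun q => W q + f q.1) = ⨆ j, lam1 j + f j := by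
  have : Nonempty ι := ⟨hT.choose.1⟩
  rw [← sup'_univ_eq_ciSup]
  refine sup'_eq_sup'_of_forall_exists_le _ _
    (fun q hq => ⟨q.1, mem_univ _, by grw [hW.le_fst q hq]⟩) fun j _ => ?_
  obtain ⟨k, hk, hjk⟩ := hW.exists_row j
  exact ⟨(j, k), hk, by rw [hjk]⟩

theorem sup'_add_snd [Fintype κ] (hW : IsCouplingMatrixOn lam1 lam2 T W) (hT : T.Nonempty)
    (f : κ → ℝ) : T.sup' hT (fun q => W q + f q.2) = ⨆ k, lam2 k + f k := by
  have : Nonempty κ := ⟨hT.choose.2⟩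
  rw [← sup'_univ_eq_ciSup]
  refine sup'_eq_sup'_of_forall_exists_le _ _
    (fun q hq => ⟨q.2, mem_univ _, by grw [hW.le_snd q hq]⟩) fun k _ => ?_
  obtain ⟨j, hj, hjk⟩ := hW.exists_col k
  exact ⟨(j, k), hj, by rw [hjk]⟩

end IsCouplingMatrixOn

end CouplingMatrix

theorem IsCouplingMatrixOn.isCoupling_maxPlus [TopologicalSpace X] {μ1 μ2 : C(X, ℝ) → ℝ}
    {n1 n2 : ℕ} {x1 : Fin n1 → X} {lam1 : Fin n1 → ℝ} {x2 : Fin n2 → X} {lam2 : Fin n2 → ℝ}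
    {T : Finset (Fin n1 × Fin n2)} {W : Fin n1 × Fin n2 → ℝ}
    (hW : IsCouplingMatrixOn lam1 lam2 T W) (hT : T.Nonempty)
    (h1 : IsRepr μ1 x1 lam1) (h2 : IsRepr μ2 x2 lam2) :
    IsCoupling μ1 μ2 (maxPlus T hT W fun q => (x1 q.1, x2 q.2)) := by
  have hW0 : T.sup' hT W = 0 := by
    simpa only [add_zero, h1.2.2.1] using hW.sup'_add_fst hT fun _ => 0
  refine ⟨isIPM_maxPlus hT _ hW0, fun φ => ?_, fun φ => ?_⟩
  · exact (hW.sup'_add_fst hT (φ ∘ x1)).trans (h1.2.2.2 φ).symm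
  · exact (hW.sup'_add_snd hT (φ ∘ x2)).trans (h2.2.2.2 φ).symm

section CrossMatrix

variable {ι κ : Type*}

/-- The weight matrix of `ξ`: `ξ⁰` is carried by the row `j0` and the column `k0`, the perturbation
by `K × M`. -/
def crossWeight [DecidableEq ι] [DecidableEq κ] (j0 : ι) (k0 : κ) (lam1 : ι → ℝ) (lam2 : κ → ℝ)
    (γ : ι → κ → ℝ) (q : ι × κ) : ℝ :=
  if q.1 = j0 then lam2 q.2 else if q.2 = k0 then lam1 q.1 else γ q.1 q.2

def crossSupport [Fintype ι] [Fintype κ] [DecidableEq ι] [DecidableEq κ] (j0 : ι) (k0 : κ)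
    (K : Finset ι) (M : Finset κ) : Finset (ι × κ) :=
  univ.filter fun q => q.1 = j0 ∨ q.2 = k0 ∨ (q.1 ∈ K ∧ q.2 ∈ M)

variable [DecidableEq ι] [DecidableEq κ] {j0 : ι} {k0 : κ} {lam1 : ι → ℝ} {lam2 : κ → ℝ}
  {γ : ι → κ → ℝ}

theorem crossWeight_row (k : κ) : crossWeight j0 k0 lam1 lam2 γ (j0, k) = lam2 k :=
  if_pos rfl

theorem crossWeight_col (h : lam1 j0 = lam2 k0) (j : ι) :
    crossWeight j0 k0 lam1 lam2 γ (j, k0) = lam1 j := by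
  by_cases hj : j = j0
  · rw [hj, crossWeight_row, h]
  · exact (if_neg hj).trans (if_pos rfl)

theorem crossWeight_of_ne {j : ι} {k : κ} (hj : j ≠ j0) (hk : k ≠ k0) :
    crossWeight j0 k0 lam1 lam2 γ (j, k) = γ j k := by
  simp only [crossWeight, if_neg hj, if_neg hk]

variable [Fintype ι] [Fintype κ] {K : Finset ι} {M : Finset κ}

theorem mem_crossSupport {q : ι × κ} :
    q ∈ crossSupport j0 k0 K M ↔ q.1 = j0 ∨ q.2 = k0 ∨ (q.1 ∈ K ∧ q.2 ∈ M) := by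
  simp only [crossSupport, mem_filter, mem_univ, true_and]

theorem isCouplingMatrixOn_cross (hl1 : ∀ j, lam1 j ≤ 0) (hl2 : ∀ k, lam2 k ≤ 0)
    (h10 : lam1 j0 = 0) (h20 : lam2 k0 = 0)
    (hγ : ∀ k ∈ K, ∀ m ∈ M, γ k m ≤ min (lam1 k) (lam2 m)) :
    IsCouplingMatrixOn lam1 lam2 (crossSupport j0 k0 K M) (crossWeight j0 k0 lam1 lam2 γ) := by
  have hle : ∀ q ∈ crossSupport j0 k0 K M,
      crossWeight j0 k0 lam1 lam2 γ q ≤ lam1 q.1 ∧ crossWeight j0 k0 lam1 lam2 γ q ≤ lam2 q.2 := by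
    rintro ⟨j, k⟩ hq
    by_cases hj : j = j0
    · subst hj
      rw [crossWeight_row, h10]
      exact ⟨hl2 k, le_rfl⟩
    by_cases hk : k = k0
    · subst hk
      rw [crossWeight_col (h10.trans h20.symm), h20]
      exact ⟨le_rfl, hl1 j⟩
    obtain ⟨hjK, hkM⟩ : j ∈ K ∧ k ∈ M := by simpa [mem_crossSupport, hj, hk] using hq
    rw [crossWeight_of_ne hj hk]
    exact le_min_iff.1 (hγ j hjK k hkM)
  refine ⟨fun q hq => (hle q hq).1, fun q hq => (hle q hq).2, fun j => ?_, fun k => ?_⟩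
  · exact ⟨k0, mem_crossSupport.2 (.inr (.inl rfl)), crossWeight_col (h10.trans h20.symm) j⟩
  · exact ⟨j0, mem_crossSupport.2 (.inl rfl), crossWeight_row k⟩

theorem isLUB_sup'_crossWeight (hK : j0 ∉ K) (hM : k0 ∉ M) (h10 : lam1 j0 = 0)
    (h20 : lam2 k0 = 0) (hT : (crossSupport j0 k0 K M).Nonempty) (F : ι → κ → ℝ) :
    IsLUB (insert (max (F j0 k0) (max (⨆ k, lam2 k + F j0 k) (⨆ j, lam1 j + F j k0)))
        {c : ℝ | ∃ k ∈ K, ∃ m ∈ M, c = γ k m + F k m})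
      ((crossSupport j0 k0 K M).sup' hT fun q => crossWeight j0 k0 lam1 lam2 γ q + F q.1 q.2) := by
  have : Nonempty ι := ⟨j0⟩
  have : Nonempty κ := ⟨k0⟩
  have hcol := crossWeight_col (γ := γ) (h10.trans h20.symm)
  refine ⟨?_, fun b hb => sup'_le _ _ ?_⟩
  · have le_sup : ∀ j k, (j, k) ∈ crossSupport j0 k0 K M →
        crossWeight j0 k0 lam1 lam2 γ (j, k) + F j k ≤
          (crossSupport j0 k0 K M).sup' hT fun q => crossWeight j0 k0 lam1 lam2 γ q + F q.1 q.2 :=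
      fun j k h => le_sup' (fun q => crossWeight j0 k0 lam1 lam2 γ q + F q.1 q.2) h
    rintro c (rfl | ⟨k, hk, m, hm, rfl⟩)
    · refine max_le ?_ (max_le (ciSup_le fun k => ?_) (ciSup_le fun j => ?_))
      · simpa only [crossWeight_row, h20, zero_add] using
          le_sup j0 k0 (mem_crossSupport.2 (.inl rfl))
      · simpa only [crossWeight_row] using le_sup j0 k (mem_crossSupport.2 (.inl rfl))
      · simpa only [hcol] using le_sup j k0 (mem_crossSupport.2 (.inr (.inl rfl)))
    · simpa only [crossWeight_of_ne (ne_of_mem_of_not_mem hk hK) (ne_of_mem_of_not_mem hm hM)]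
        using le_sup k m (mem_crossSupport.2 (.inr (.inr ⟨hk, hm⟩)))
  · obtain ⟨-, hrow, hcolumn⟩ : _ ∧ _ ∧ _ := by
      simpa only [max_le_iff] using hb (Set.mem_insert _ _)
    rintro ⟨j, k⟩ hq
    rcases mem_crossSupport.1 hq with rfl | rfl | ⟨hj, hk⟩
    · rw [crossWeight_row]
      exact (le_ciSup (f := fun k => lam2 k + F j k) (Set.finite_range _).bddAbove k).trans hrow
    · rw [hcol]
      exact (le_ciSup (f := fun j => lam1 j + F j k) (Set.finite_range _).bddAbove j).trans hcolumn
    · rw [crossWeight_of_ne (ne_of_mem_of_not_mem hj hK) (ne_of_mem_of_not_mem hk hM)]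
      exact hb (Set.mem_insert_of_mem _ ⟨j, hj, k, hk, rfl⟩)

end CrossMatrix

theorem stmt1_general [MetricSpace X]
    (μ1 μ2 : C(X, ℝ) → ℝ) {n1 n2 : ℕ}
    (x1 : Fin n1 → X) (lam1 : Fin n1 → ℝ) (x2 : Fin n2 → X) (lam2 : Fin n2 → ℝ)
    (hn1 : 0 < n1) (hn2 : 0 < n2)
    (h1 : IsRepr μ1 x1 lam1) (h2 : IsRepr μ2 x2 lam2)
    (hl1 : lam1 ⟨0, hn1⟩ = 0) (hl2 : lam2 ⟨0, hn2⟩ = 0)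
    (K : Finset (Fin n1)) (M : Finset (Fin n2))
    (hK : (⟨0, hn1⟩ : Fin n1) ∉ K) (hM : (⟨0, hn2⟩ : Fin n2) ∉ M)
    (γ : Fin n1 → Fin n2 → ℝ)
    (hγ : ∀ k ∈ K, ∀ m ∈ M, γ k m ≤ min (lam1 k) (lam2 m)) :
    IsCoupling μ1 μ2 (fun Φ : C(X × X, ℝ) =>
      sSup (insert
        (max (Φ (x1 ⟨0, hn1⟩, x2 ⟨0, hn2⟩))
          (max (⨆ t : Fin n2, (lam2 t + Φ (x1 ⟨0, hn1⟩, x2 t)))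
               (⨆ t : Fin n1, (lam1 t + Φ (x1 t, x2 ⟨0, hn2⟩)))))
        {c : ℝ | ∃ k ∈ K, ∃ m ∈ M, c = γ k m + Φ (x1 k, x2 m)})) := by
  have hT : (crossSupport (⟨0, hn1⟩ : Fin n1) (⟨0, hn2⟩ : Fin n2) K M).Nonempty :=
    ⟨(⟨0, hn1⟩, ⟨0, hn2⟩), mem_crossSupport.2 (.inl rfl)⟩
  have hW := isCouplingMatrixOn_cross h1.le_zero h2.le_zero hl1 hl2 hγ
  convert hW.isCoupling_maxPlus hT h1 h2 using 1
  funext Φ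
  exact (isLUB_sup'_crossWeight hK hM hl1 hl2 hT fun j k => Φ (x1 j, x2 k)).csSup_eq
    (Set.insert_nonempty _ _)

/-- every perturbation `ξ = ξ⁰ ⊕ R(μ₁,μ₂)` by masses
`γ_{km} ≤ min{λ_{1k}, λ_{2m}}`, `k ∈ K ⊆ {2,…,n₁}`, `m ∈ M ⊆ {2,…,n₂}`,
is again a coupling of μ₁ and μ₂. -/
theorem stmt1 [MetricSpace X] [CompactSpace X]
    (μ1 μ2 : C(X, ℝ) → ℝ) {n1 n2 : ℕ}
    (x1 : Fin n1 → X) (lam1 : Fin n1 → ℝ) (x2 : Fin n2 → X) (lam2 : Fin n2 → ℝ)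
    (hn1 : 0 < n1) (hn2 : 0 < n2)
    (h1 : IsRepr μ1 x1 lam1) (h2 : IsRepr μ2 x2 lam2)
    (hl1 : lam1 ⟨0, hn1⟩ = 0) (hl2 : lam2 ⟨0, hn2⟩ = 0)
    (K : Finset (Fin n1)) (M : Finset (Fin n2))
    (hK : (⟨0, hn1⟩ : Fin n1) ∉ K) (hM : (⟨0, hn2⟩ : Fin n2) ∉ M)
    (γ : Fin n1 → Fin n2 → ℝ)
    (hγ : ∀ k ∈ K, ∀ m ∈ M, γ k m ≤ min (lam1 k) (lam2 m)) :
    IsCoupling μ1 μ2 (fun Φ : C(X × X, ℝ) =>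
      sSup (insert
        (max (Φ (x1 ⟨0, hn1⟩, x2 ⟨0, hn2⟩))
          (max (⨆ t : Fin n2, (lam2 t + Φ (x1 ⟨0, hn1⟩, x2 t)))
               (⨆ t : Fin n1, (lam1 t + Φ (x1 t, x2 ⟨0, hn2⟩)))))
        {c : ℝ | ∃ k ∈ K, ∃ m ∈ M, c = γ k m + Φ (x1 k, x2 m)})) :=
  stmt1_general μ1 μ2 x1 lam1 x2 lam2 hn1 hn2 h1 h2 hl1 hl2 K M hK hM γ hγ
end

section
/- (Lemma 3) Let μ₁, μ₂, μ₃ be finitely supported idempotent probability measures on X with representations μ_i(φ) = max_{1≤j≤n_i}(λ_{ij} + φ(x_{ij})) (i = 1, 2, 3). Let (γ_{km}) be a coupling matrix for μ₁, μ₂ attaining H(μ₁, μ₂) and (η_{ml}) a coupling matrix for μ₂, μ₃ attaining H(μ₂, μ₃). Then there exists a coupling matrix (ζ_{kl}) for μ₁, μ₃ such that {(k, l) : ζ_{kl} ≠ −∞} = {(k, l) : there exists m ∈ {1, …, n₂} with γ_{km} ≠ −∞ and η_{ml} ≠ −∞}. -/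
open Filter Topology

variable {X : Type*}

/-!
Take `ζ` to be the max-min product of `γ` and `η`. Since the column maxima of `γ` and the row
maxima of `η` are both `λ₂`, every entry `γ k m` is at most `max_l η m l`, so distributivity gives
`max_l ζ k l = max_m γ k m = λ₁ k`; symmetrically for the columns. In the linear order `ℝ ∪ {−∞}`
a minimum is `−∞` only if one of its arguments is, which gives the support of `ζ`.
-/

open Finset

section SupInfComp

variable {α ι κ ν : Type*} [Fintype κ]

def supInfComp [Lattice α] [OrderBot α] (γ : ι → κ → α) (η : κ → ν → α) : ι → ν → α :=
  fun i l => univ.sup fun m => γ i m ⊓ η m l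

theorem sup_supInfComp_row [DistribLattice α] [OrderBot α] [Fintype ν]
    {γ : ι → κ → α} {η : κ → ν → α} {i : ι} (h : ∀ m, γ i m ≤ univ.sup (η m)) :
    univ.sup (supInfComp γ η i) = univ.sup (γ i) := by
  calc univ.sup (supInfComp γ η i)
      = univ.sup fun m => univ.sup fun l => γ i m ⊓ η m l := Finset.sup_comm _ _ _
    _ = univ.sup fun m => γ i m ⊓ univ.sup (η m) := by simp only [sup_inf_distrib_left]
    _ = univ.sup (γ i) := by simp only [inf_eq_left.mpr (h _)]

theorem sup_supInfComp_col [DistribLattice α] [OrderBot α] [Fintype ι]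
    {γ : ι → κ → α} {η : κ → ν → α} {l : ν} (h : ∀ m, η m l ≤ univ.sup fun i => γ i m) :
    (univ.sup fun i => supInfComp γ η i l) = univ.sup fun m => η m l := by
  calc (univ.sup fun i => supInfComp γ η i l)
      = univ.sup fun m => univ.sup fun i => γ i m ⊓ η m l := Finset.sup_comm _ _ _
    _ = univ.sup fun m => (univ.sup fun i => γ i m) ⊓ η m l := by
      simp only [sup_inf_distrib_right]
    _ = univ.sup fun m => η m l := by simp only [inf_eq_right.mpr (h _)]

theorem supInfComp_ne_bot_iff [LinearOrder α] [OrderBot α]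
    {γ : ι → κ → α} {η : κ → ν → α} {i : ι} {l : ν} :
    supInfComp γ η i l ≠ ⊥ ↔ ∃ m, γ i m ≠ ⊥ ∧ η m l ≠ ⊥ := by
  simp only [supInfComp, ne_eq, Finset.sup_eq_bot_iff, mem_univ, min_eq_bot, forall_const,
    not_forall, not_or]

end SupInfComp

theorem IsCouplingMatrix.supInfComp {n1 n2 n3 : ℕ} {lam1 : Fin n1 → ℝ} {lam2 : Fin n2 → ℝ}
    {lam3 : Fin n3 → ℝ} {γ : Fin n1 → Fin n2 → WithBot ℝ} {η : Fin n2 → Fin n3 → WithBot ℝ}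
    (hγ : IsCouplingMatrix lam1 lam2 γ) (hη : IsCouplingMatrix lam2 lam3 η) :
    IsCouplingMatrix lam1 lam3 (supInfComp γ η) := by
  refine ⟨fun k => ?_, fun l => ?_⟩
  · rw [sup_supInfComp_row fun m => ?_]
    · exact hγ.1 k
    rw [hη.1 m, ← hγ.2 m]
    exact le_sup (f := fun j => γ j m) (mem_univ k)
  · rw [sup_supInfComp_col fun m => ?_]
    · exact hη.2 l
    rw [hγ.2 m, ← hη.1 m]
    exact le_sup (mem_univ l)

theorem stmt5_general {n1 n2 n3 : ℕ}
    (lam1 : Fin n1 → ℝ) (lam2 : Fin n2 → ℝ)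
    (lam3 : Fin n3 → ℝ)
    (γ : Fin n1 → Fin n2 → WithBot ℝ) (η : Fin n2 → Fin n3 → WithBot ℝ)
    (hγ : IsCouplingMatrix lam1 lam2 γ)
    (hη : IsCouplingMatrix lam2 lam3 η) :
    ∃ ζ : Fin n1 → Fin n3 → WithBot ℝ, IsCouplingMatrix lam1 lam3 ζ ∧
      ∀ k l, ζ k l ≠ ⊥ ↔ ∃ m, γ k m ≠ ⊥ ∧ η m l ≠ ⊥ :=
  ⟨supInfComp γ η, hγ.supInfComp hη, fun _ _ => supInfComp_ne_bot_iff⟩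

/-- Lemma 3: given coupling matrices attaining `H(μ₁, μ₂)` and
`H(μ₂, μ₃)`, there is a coupling matrix for `μ₁, μ₃` whose finite entries sit
exactly at the "composed" positions. -/
theorem stmt5 [MetricSpace X] [CompactSpace X]
    (μ1 μ2 μ3 : C(X, ℝ) → ℝ) {n1 n2 n3 : ℕ}
    (x1 : Fin n1 → X) (lam1 : Fin n1 → ℝ) (x2 : Fin n2 → X) (lam2 : Fin n2 → ℝ)
    (x3 : Fin n3 → X) (lam3 : Fin n3 → ℝ)
    (h1 : IsRepr μ1 x1 lam1) (h2 : IsRepr μ2 x2 lam2) (h3 : IsRepr μ3 x3 lam3)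
    (γ : Fin n1 → Fin n2 → WithBot ℝ) (η : Fin n2 → Fin n3 → WithBot ℝ)
    (hγ : IsCouplingMatrix lam1 lam2 γ)
    (hγH : matCost x1 lam1 x2 lam2 γ = Hdist μ1 μ2)
    (hη : IsCouplingMatrix lam2 lam3 η)
    (hηH : matCost x2 lam2 x3 lam3 η = Hdist μ2 μ3) :
    ∃ ζ : Fin n1 → Fin n3 → WithBot ℝ, IsCouplingMatrix lam1 lam3 ζ ∧
      ∀ k l, ζ k l ≠ ⊥ ↔ ∃ m, γ k m ≠ ⊥ ∧ η m l ≠ ⊥ :=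
  stmt5_general lam1 lam2 lam3 γ η hγ hη
end

section
/- For finitely supported idempotent probability measures μ₁, μ₂ on X, H(μ₁, μ₂) = 0 if and only if μ₁ = μ₂ (i.e., μ₁(φ) = μ₂(φ) for all φ ∈ C(X, ℝ)). -/
open Filter Topology

variable {X : Type*}

/-! The diagonal coupling matrix of a representation has cost `0`, so `H(μ, μ) = 0`.
Conversely, if a coupling matrix of `μ₁`, `μ₂` has cost `< ε`, then every atom
`λ₂ₖ + φ(x₂ₖ)` of `μ₂ φ` lies within `ε + ω_φ(ε)` of an atom `λ₁ⱼ + φ(x₁ⱼ)` of `μ₁ φ`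
(take `j` attaining the maximum in column `k`) and vice versa, where `ω_φ` is the modulus of
uniform continuity of `φ` on the compactum `X`; hence `|μ₁ φ - μ₂ φ| ≤ ε + ω_φ(ε) → 0`. -/

section Representation

variable [TopologicalSpace X] {μ : C(X, ℝ) → ℝ} {n : ℕ} {x : Fin n → X} {lam : Fin n → ℝ}

theorem IsRepr.weight_le_zero (h : IsRepr μ x lam) (i : Fin n) : lam i ≤ 0 :=
  h.2.2.1 ▸ le_ciSup (Set.finite_range lam).bddAbove i

theorem IsRepr.exists_weight_eq_zero (h : IsRepr μ x lam) : ∃ i, lam i = 0 := by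
  have : Nonempty (Fin n) := ⟨⟨0, h.1⟩⟩
  obtain ⟨i, hi⟩ := Finite.exists_max lam
  exact ⟨i, le_antisymm (h.weight_le_zero i) (h.2.2.1 ▸ ciSup_le hi)⟩

end Representation

section CouplingMatrix

variable {n1 n2 : ℕ} {lam1 : Fin n1 → ℝ} {lam2 : Fin n2 → ℝ}

theorem sup_coe_min_eq_left {n : ℕ} (a : ℝ) (b : Fin n → ℝ) (h : ∃ k, a ≤ b k) :
    (Finset.univ.sup fun k => ((min a (b k) : ℝ) : WithBot ℝ)) = a := by
  obtain ⟨k, hk⟩ := h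
  refine le_antisymm (Finset.sup_le fun i _ => WithBot.coe_le_coe.mpr (min_le_left _ _)) ?_
  exact Finset.le_sup_of_le (Finset.mem_univ k) (by rw [min_eq_left hk])

theorem isCouplingMatrix_min (h12 : ∀ j, ∃ k, lam1 j ≤ lam2 k) (h21 : ∀ k, ∃ j, lam2 k ≤ lam1 j) :
    IsCouplingMatrix lam1 lam2 fun j k => ((min (lam1 j) (lam2 k) : ℝ) : WithBot ℝ) := by
  refine ⟨fun j => sup_coe_min_eq_left _ _ (h12 j), fun k => ?_⟩
  simp_rw [min_comm _ (lam2 k)]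
  exact sup_coe_min_eq_left _ _ (h21 k)

theorem isCouplingMatrix_diagonal (lam : Fin n1 → ℝ) :
    IsCouplingMatrix lam lam fun j k => if j = k then (lam j : WithBot ℝ) else ⊥ := by
  constructor
  · intro j
    refine le_antisymm (Finset.sup_le fun k _ => ?_) (Finset.le_sup_of_le (Finset.mem_univ j) ?_)
    · dsimp only; split_ifs <;> simp
    · simp
  · intro k
    refine le_antisymm (Finset.sup_le fun j _ => ?_) (Finset.le_sup_of_le (Finset.mem_univ k) ?_)
    · dsimp only; split_ifs with hjk
      · rw [hjk]
      · exact bot_le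
    · simp

theorem IsRepr.exists_isCouplingMatrix [TopologicalSpace X] {μ1 μ2 : C(X, ℝ) → ℝ}
    {x1 : Fin n1 → X} {x2 : Fin n2 → X} (h1 : IsRepr μ1 x1 lam1) (h2 : IsRepr μ2 x2 lam2) :
    ∃ γ, IsCouplingMatrix lam1 lam2 γ := by
  obtain ⟨j₀, hj₀⟩ := h1.exists_weight_eq_zero
  obtain ⟨k₀, hk₀⟩ := h2.exists_weight_eq_zero
  exact ⟨_, isCouplingMatrix_min (fun j => ⟨k₀, hk₀ ▸ h1.weight_le_zero j⟩)
    (fun k => ⟨j₀, hj₀ ▸ h2.weight_le_zero k⟩)⟩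

theorem IsRepr.apply_le_add_of_forall_ne_bot [TopologicalSpace X] {μ1 μ2 : C(X, ℝ) → ℝ}
    {x1 : Fin n1 → X} {x2 : Fin n2 → X} {γ : Fin n1 → Fin n2 → WithBot ℝ}
    (h1 : IsRepr μ1 x1 lam1) (h2 : IsRepr μ2 x2 lam2)
    (hcol : ∀ k, (Finset.univ.sup fun j => γ j k) = (lam2 k : WithBot ℝ))
    (φ : C(X, ℝ)) {δ : ℝ}
    (hδ : ∀ j k, γ j k ≠ ⊥ → lam2 k + φ (x2 k) ≤ lam1 j + φ (x1 j) + δ) :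
    μ2 φ ≤ μ1 φ + δ := by
  have : Nonempty (Fin n2) := ⟨⟨0, h2.1⟩⟩
  rw [h1.2.2.2 φ, h2.2.2.2 φ]
  refine ciSup_le fun k => ?_
  obtain ⟨j, -, hj⟩ :=
    Finset.exists_mem_eq_sup Finset.univ ⟨⟨0, h1.1⟩, Finset.mem_univ _⟩ fun j => γ j k
  have hne : γ j k ≠ ⊥ := by rw [← hj, hcol k]; exact WithBot.coe_ne_bot
  have hatom := le_ciSup (Set.finite_range fun i => lam1 i + φ (x1 i)).bddAbove j
  linarith [hδ j k hne]

end CouplingMatrix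

section Cost

variable [MetricSpace X] {n1 n2 : ℕ} {x1 : Fin n1 → X} {lam1 : Fin n1 → ℝ}
  {x2 : Fin n2 → X} {lam2 : Fin n2 → ℝ} {γ : Fin n1 → Fin n2 → WithBot ℝ}

theorem matCost_nonneg : 0 ≤ matCost x1 lam1 x2 lam2 γ :=
  Real.sSup_nonneg <| by rintro c ⟨j, k, -, rfl⟩; positivity

theorem le_matCost {j : Fin n1} {k : Fin n2} (h : γ j k ≠ ⊥) :
    |lam2 k - lam1 j| + dist (x1 j) (x2 k) ≤ matCost x1 lam1 x2 lam2 γ := by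
  refine le_csSup ?_ ⟨j, k, h, rfl⟩
  refine (Set.finite_range fun p : Fin n1 × Fin n2 =>
    |lam2 p.2 - lam1 p.1| + dist (x1 p.1) (x2 p.2)).bddAbove.mono ?_
  rintro c ⟨j, k, -, rfl⟩
  exact ⟨(j, k), rfl⟩

theorem matCost_diagonal (x : Fin n1 → X) (lam : Fin n1 → ℝ) :
    matCost x lam x lam (fun j k => if j = k then (lam j : WithBot ℝ) else ⊥) = 0 := by
  refine le_antisymm (Real.sSup_nonpos ?_) matCost_nonneg
  rintro c ⟨j, k, hne, rfl⟩
  obtain rfl : j = k := by by_contra hjk; simp [hjk] at hne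
  simp

theorem abs_atom_sub_le_of_matCost_lt {φ : C(X, ℝ)} {ε δ : ℝ}
    (hc : matCost x1 lam1 x2 lam2 γ < ε) (hφ : ∀ a b, dist a b < ε → |φ a - φ b| ≤ δ)
    {j : Fin n1} {k : Fin n2} (hjk : γ j k ≠ ⊥) :
    |(lam2 k + φ (x2 k)) - (lam1 j + φ (x1 j))| ≤ ε + δ := by
  have hcost := (le_matCost hjk).trans_lt hc
  have hdist : dist (x2 k) (x1 j) < ε := by
    rw [dist_comm]; linarith [abs_nonneg (lam2 k - lam1 j)]
  calc |(lam2 k + φ (x2 k)) - (lam1 j + φ (x1 j))|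
      ≤ |lam2 k - lam1 j| + |φ (x2 k) - φ (x1 j)| := by
        rw [add_sub_add_comm]; exact abs_add_le _ _
    _ ≤ ε + δ := add_le_add (by linarith [dist_nonneg (x := x1 j) (y := x2 k)]) (hφ _ _ hdist)

theorem abs_sub_le_of_matCost_lt {μ1 μ2 : C(X, ℝ) → ℝ}
    (h1 : IsRepr μ1 x1 lam1) (h2 : IsRepr μ2 x2 lam2) (hγ : IsCouplingMatrix lam1 lam2 γ)
    {φ : C(X, ℝ)} {ε δ : ℝ}
    (hc : matCost x1 lam1 x2 lam2 γ < ε) (hφ : ∀ a b, dist a b < ε → |φ a - φ b| ≤ δ) :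
    |μ1 φ - μ2 φ| ≤ ε + δ := by
  have hatom := fun j k (hjk : γ j k ≠ ⊥) => abs_le.mp (abs_atom_sub_le_of_matCost_lt hc hφ hjk)
  rw [abs_sub_le_iff, sub_le_iff_le_add', sub_le_iff_le_add']
  constructor
  · refine h2.apply_le_add_of_forall_ne_bot (γ := fun k j => γ j k) h1 hγ.1 φ fun k j hjk => ?_
    linarith [(hatom j k hjk).1]
  · refine h1.apply_le_add_of_forall_ne_bot h2 hγ.2 φ fun j k hjk => ?_
    linarith [(hatom j k hjk).2]

end Cost

section Hdist

variable [MetricSpace X] {μ1 μ2 : C(X, ℝ) → ℝ}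

theorem Hdist_nonneg : 0 ≤ Hdist μ1 μ2 :=
  Real.sInf_nonneg <| by rintro c ⟨-, -, -, -, -, -, -, -, -, -, rfl⟩; exact matCost_nonneg

theorem Hdist_self {μ : C(X, ℝ) → ℝ} (h : IsFinSuppIPM μ) : Hdist μ μ = 0 := by
  obtain ⟨n, x, lam, hr⟩ := h
  refine le_antisymm ?_ Hdist_nonneg
  unfold Hdist
  refine csInf_le ⟨0, ?_⟩ ?_
  · rintro c ⟨-, -, -, -, -, -, -, -, -, -, rfl⟩
    exact matCost_nonneg
  · exact ⟨n, n, x, lam, x, lam, _, hr, hr, isCouplingMatrix_diagonal lam,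
      (matCost_diagonal x lam).symm⟩

theorem exists_matCost_lt_of_Hdist_lt (h1 : IsFinSuppIPM μ1) (h2 : IsFinSuppIPM μ2) {ε : ℝ}
    (hε : Hdist μ1 μ2 < ε) :
    ∃ (n1 n2 : ℕ) (x1 : Fin n1 → X) (lam1 : Fin n1 → ℝ) (x2 : Fin n2 → X) (lam2 : Fin n2 → ℝ)
      (γ : Fin n1 → Fin n2 → WithBot ℝ), IsRepr μ1 x1 lam1 ∧ IsRepr μ2 x2 lam2 ∧
      IsCouplingMatrix lam1 lam2 γ ∧ matCost x1 lam1 x2 lam2 γ < ε := by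
  obtain ⟨n1, x1, lam1, hr1⟩ := h1
  obtain ⟨n2, x2, lam2, hr2⟩ := h2
  obtain ⟨γ, hγ⟩ := hr1.exists_isCouplingMatrix hr2
  obtain ⟨c, ⟨n1, n2, x1, lam1, x2, lam2, γ, hr1, hr2, hγ, rfl⟩, hc⟩ :=
    exists_lt_of_csInf_lt (by exact ⟨_, n1, n2, x1, lam1, x2, lam2, γ, hr1, hr2, hγ, rfl⟩) hε
  exact ⟨n1, n2, x1, lam1, x2, lam2, γ, hr1, hr2, hγ, hc⟩

end Hdist

/-- for finitely supported idempotent probability measures,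
`H(μ₁, μ₂) = 0` iff `μ₁ = μ₂`. -/
theorem stmt6 [MetricSpace X] [CompactSpace X]
    (μ1 μ2 : C(X, ℝ) → ℝ) (h1 : IsFinSuppIPM μ1) (h2 : IsFinSuppIPM μ2) :
    Hdist μ1 μ2 = 0 ↔ μ1 = μ2 := by
  refine ⟨fun h0 => funext fun φ => eq_of_forall_dist_le fun ε hε => ?_, fun h => h ▸ Hdist_self h1⟩
  obtain ⟨δ, hδ, hφ⟩ := Metric.uniformContinuous_iff.mp
    (CompactSpace.uniformContinuous_of_continuous φ.continuous) (ε / 2) (half_pos hε)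
  obtain ⟨n1, n2, x1, lam1, x2, lam2, γ, hr1, hr2, hγ, hc⟩ :=
    exists_matCost_lt_of_Hdist_lt h1 h2 (h0 ▸ lt_min hδ (half_pos hε))
  have hmod : ∀ a b, dist a b < min δ (ε / 2) → |φ a - φ b| ≤ ε / 2 := fun a b hab =>
    (hφ (hab.trans_le (min_le_left _ _))).le
  rw [Real.dist_eq]
  linarith [abs_sub_le_of_matCost_lt hr1 hr2 hγ hc hmod, min_le_right δ (ε / 2)]
end

section
/- For any three finitely supported idempotent probability measures μ₁, μ₂, μ₃ on X, the triangle inequality H(μ₁, μ₃) ≤ H(μ₁, μ₂) + H(μ₂, μ₃) holds. -/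
open Filter Topology

variable {X : Type*}

section AuxLemmas

variable {X : Type*}

lemma sup_zero_facts {n : ℕ} (hn : 0 < n) (f : Fin n → ℝ) (h : (⨆ i, f i) = 0) :
    (∀ i, f i ≤ 0) ∧ ∃ i, f i = 0 := by
  haveI : Nonempty (Fin n) := ⟨⟨0, hn⟩⟩
  have hb : BddAbove (Set.range f) := (Set.finite_range f).bddAbove
  have hle : ∀ i, f i ≤ 0 := fun i => h ▸ le_ciSup hb i
  obtain ⟨i₀, hi₀⟩ := Finite.exists_max f
  refine ⟨hle, i₀, le_antisymm (hle i₀) ?_⟩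
  rw [← h]; exact ciSup_le hi₀

lemma withBot_add_coe_neg (a : WithBot ℝ) (b : ℝ) :
    a + (b : WithBot ℝ) + ((-b : ℝ) : WithBot ℝ) = a := by
  induction a using WithBot.recBotCoe with
  | bot => simp
  | coe x => rw [← WithBot.coe_add, ← WithBot.coe_add]; norm_num

/-- The key uniqueness lemma: any point/weight of one representation appears in any other. -/
lemma repr_point [MetricSpace X] {μ : C(X, ℝ) → ℝ} {n n' : ℕ}
    {x : Fin n → X} {lam : Fin n → ℝ} {x' : Fin n' → X} {lam' : Fin n' → ℝ}
    (h : IsRepr μ x lam) (h' : IsRepr μ x' lam') (i₀ : Fin n) :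
    ∃ j, x' j = x i₀ ∧ lam' j = lam i₀ := by
  obtain ⟨hn, hinj, hsup, hval⟩ := h
  obtain ⟨hn', hinj', hsup', hval'⟩ := h'
  haveI : Nonempty (Fin n) := ⟨⟨0, hn⟩⟩
  haveI : Nonempty (Fin n') := ⟨⟨0, hn'⟩⟩
  have key : ∀ t : ℝ, (⨆ i, lam i + -(t * dist (x i) (x i₀)))
      = ⨆ j, lam' j + -(t * dist (x' j) (x i₀)) := by
    intro t
    have hc : Continuous fun y : X => -(t * dist y (x i₀)) := by fun_prop
    exact (hval ⟨fun y => -(t * dist y (x i₀)), hc⟩).symm.trans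
      (hval' ⟨fun y => -(t * dist y (x i₀)), hc⟩)
  have hex : ∃ j, x' j = x i₀ := by
    by_contra hne
    push_neg at hne
    set t : ℝ := Finset.univ.sup' Finset.univ_nonempty
        (fun j => (lam' j - lam i₀ + 1) / dist (x' j) (x i₀)) with ht
    have hL : lam i₀ ≤ ⨆ i, lam i + -(t * dist (x i) (x i₀)) := by
      have := le_ciSup ((Set.finite_range fun i => lam i + -(t * dist (x i) (x i₀))).bddAbove) i₀
      simpa using this
    have hR : (⨆ j, lam' j + -(t * dist (x' j) (x i₀))) ≤ lam i₀ - 1 := by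
      apply ciSup_le
      intro j
      have hd : 0 < dist (x' j) (x i₀) := dist_pos.2 (hne j)
      have hts : (lam' j - lam i₀ + 1) / dist (x' j) (x i₀) ≤ t :=
        Finset.le_sup' (fun j => (lam' j - lam i₀ + 1) / dist (x' j) (x i₀))
          (Finset.mem_univ j)
      rw [div_le_iff₀ hd] at hts
      linarith
    rw [key t] at hL
    linarith
  obtain ⟨j₀, hj₀⟩ := hex
  refine ⟨j₀, hj₀, ?_⟩
  classical
  set T1 : Fin n → ℝ := fun i =>
    if x i = x i₀ then 0 else (lam i - lam i₀) / dist (x i) (x i₀) with hT1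
  set T2 : Fin n' → ℝ := fun j =>
    if x' j = x i₀ then 0 else (lam' j - lam' j₀) / dist (x' j) (x i₀) with hT2
  set t : ℝ := max 0 (max (Finset.univ.sup' Finset.univ_nonempty T1)
      (Finset.univ.sup' Finset.univ_nonempty T2)) with htdef
  have hL : (⨆ i, lam i + -(t * dist (x i) (x i₀))) = lam i₀ := by
    apply le_antisymm
    · apply ciSup_le
      intro i
      by_cases hxi : x i = x i₀
      · have hii : i = i₀ := hinj hxi
        subst hii
        simp
      · have hd : 0 < dist (x i) (x i₀) := dist_pos.2 hxi
        have h1 : T1 i ≤ t := le_trans (Finset.le_sup' T1 (Finset.mem_univ i))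
          (le_trans (le_max_left _ _) (le_max_right _ _))
        rw [hT1] at h1
        simp only [hxi, if_false] at h1
        rw [div_le_iff₀ hd] at h1
        linarith
    · have := le_ciSup ((Set.finite_range fun i => lam i + -(t * dist (x i) (x i₀))).bddAbove) i₀
      simpa using this
  have hR : (⨆ j, lam' j + -(t * dist (x' j) (x i₀))) = lam' j₀ := by
    apply le_antisymm
    · apply ciSup_le
      intro j
      by_cases hxj : x' j = x i₀
      · have hjj : j = j₀ := hinj' (hxj.trans hj₀.symm)
        subst hjj
        simp [hxj]
      · have hd : 0 < dist (x' j) (x i₀) := dist_pos.2 hxj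
        have h1 : T2 j ≤ t := le_trans (Finset.le_sup' T2 (Finset.mem_univ j))
          (le_trans (le_max_right _ _) (le_max_right _ _))
        rw [hT2] at h1
        simp only [hxj, if_false] at h1
        rw [div_le_iff₀ hd] at h1
        linarith
    · have := le_ciSup ((Set.finite_range fun j => lam' j + -(t * dist (x' j) (x i₀))).bddAbove) j₀
      simpa [hj₀] using this
  have := key t
  rw [hL, hR] at this
  exact this.symm

lemma repr_equiv [MetricSpace X] {μ : C(X, ℝ) → ℝ} {n n' : ℕ}
    {x : Fin n → X} {lam : Fin n → ℝ} {x' : Fin n' → X} {lam' : Fin n' → ℝ}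
    (h : IsRepr μ x lam) (h' : IsRepr μ x' lam') :
    ∃ σ : Fin n → Fin n', Function.Bijective σ ∧
      (∀ k, x' (σ k) = x k) ∧ (∀ k, lam' (σ k) = lam k) := by
  choose σ hσx hσl using fun i => repr_point h h' i
  choose τ hτx _ using fun j => repr_point h' h j
  have hσinj : Function.Injective σ := fun a b hab =>
    h.2.1 (by rw [← hσx a, ← hσx b, hab])
  have hτinj : Function.Injective τ := fun a b hab =>
    h'.2.1 (by rw [← hτx a, ← hτx b, hab])
  have hcard : n = n' := le_antisymm
    (by simpa using Fintype.card_le_of_injective σ hσinj)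
    (by simpa using Fintype.card_le_of_injective τ hτinj)
  exact ⟨σ, (Fintype.bijective_iff_injective_and_card σ).2 ⟨hσinj, by simp [hcard]⟩, hσx, hσl⟩

lemma costSet_bddAbove [MetricSpace X] {n1 n2 : ℕ} (x1 : Fin n1 → X) (lam1 : Fin n1 → ℝ)
    (x2 : Fin n2 → X) (lam2 : Fin n2 → ℝ) (γ : Fin n1 → Fin n2 → WithBot ℝ) :
    BddAbove {c : ℝ | ∃ j k, γ j k ≠ ⊥ ∧ c = |lam2 k - lam1 j| + dist (x1 j) (x2 k)} := by
  apply Set.Finite.bddAbove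
  apply Set.Finite.subset (Set.finite_range
    fun p : Fin n1 × Fin n2 => |lam2 p.2 - lam1 p.1| + dist (x1 p.1) (x2 p.2))
  rintro c ⟨j, k, -, rfl⟩
  exact ⟨(j, k), rfl⟩

lemma entry_le_matCost [MetricSpace X] {n1 n2 : ℕ} {x1 : Fin n1 → X} {lam1 : Fin n1 → ℝ}
    {x2 : Fin n2 → X} {lam2 : Fin n2 → ℝ} {γ : Fin n1 → Fin n2 → WithBot ℝ}
    {j : Fin n1} {k : Fin n2} (hjk : γ j k ≠ ⊥) :
    |lam2 k - lam1 j| + dist (x1 j) (x2 k) ≤ matCost x1 lam1 x2 lam2 γ :=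
  le_csSup (costSet_bddAbove x1 lam1 x2 lam2 γ) ⟨j, k, hjk, rfl⟩

lemma exists_entry {n1 n2 : ℕ} {lam1 : Fin n1 → ℝ} {lam2 : Fin n2 → ℝ}
    {γ : Fin n1 → Fin n2 → WithBot ℝ} (hcm : IsCouplingMatrix lam1 lam2 γ) (hn : 0 < n1) :
    ∃ j k, γ j k ≠ ⊥ := by
  refine ⟨⟨0, hn⟩, ?_⟩
  by_contra hc
  push_neg at hc
  have hb : (Finset.univ.sup fun k => γ ⟨0, hn⟩ k) = ⊥ :=
    le_antisymm (Finset.sup_le fun k _ => (hc k).le) bot_le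
  rw [hcm.1 ⟨0, hn⟩] at hb
  exact WithBot.coe_ne_bot hb

lemma matCost_nonneg_s7 [MetricSpace X] {n1 n2 : ℕ} {x1 : Fin n1 → X} {lam1 : Fin n1 → ℝ}
    {x2 : Fin n2 → X} {lam2 : Fin n2 → ℝ} {γ : Fin n1 → Fin n2 → WithBot ℝ}
    (hcm : IsCouplingMatrix lam1 lam2 γ) (hn : 0 < n1) :
    0 ≤ matCost x1 lam1 x2 lam2 γ := by
  obtain ⟨j, k, hjk⟩ := exists_entry hcm hn
  have h1 := entry_le_matCost (x1 := x1) (lam1 := lam1) (x2 := x2) (lam2 := lam2) hjk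
  have h2 : (0:ℝ) ≤ |lam2 k - lam1 j| + dist (x1 j) (x2 k) :=
    add_nonneg (abs_nonneg _) dist_nonneg
  linarith

lemma prod_couplingMatrix {n1 n2 : ℕ} (hn1 : 0 < n1) (hn2 : 0 < n2)
    {lam1 : Fin n1 → ℝ} {lam2 : Fin n2 → ℝ}
    (h1 : (⨆ j, lam1 j) = 0) (h2 : (⨆ k, lam2 k) = 0) :
    IsCouplingMatrix lam1 lam2 (fun j k => ((lam1 j + lam2 k : ℝ) : WithBot ℝ)) := by
  obtain ⟨hle1, k1, hk1⟩ := sup_zero_facts hn1 lam1 h1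
  obtain ⟨hle2, k2, hk2⟩ := sup_zero_facts hn2 lam2 h2
  constructor
  · intro j
    apply le_antisymm
    · exact Finset.sup_le fun k _ => WithBot.coe_le_coe.2 (by linarith [hle2 k])
    · have := Finset.le_sup (f := fun k => ((lam1 j + lam2 k : ℝ) : WithBot ℝ))
        (Finset.mem_univ k2)
      simpa [hk2] using this
  · intro k
    apply le_antisymm
    · exact Finset.sup_le fun j _ => WithBot.coe_le_coe.2 (by linarith [hle1 j])
    · have := Finset.le_sup (f := fun j => ((lam1 j + lam2 k : ℝ) : WithBot ℝ))
        (Finset.mem_univ k1)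
      simpa [hk1] using this

end AuxLemmas
section MainAux

variable {X : Type*}

/-- The set whose infimum defines `Hdist`. -/
def HSet [MetricSpace X] (μ1 μ2 : C(X, ℝ) → ℝ) : Set ℝ :=
  {c : ℝ | ∃ (n1 n2 : ℕ) (x1 : Fin n1 → X) (lam1 : Fin n1 → ℝ)
      (x2 : Fin n2 → X) (lam2 : Fin n2 → ℝ) (γ : Fin n1 → Fin n2 → WithBot ℝ),
      IsRepr μ1 x1 lam1 ∧ IsRepr μ2 x2 lam2 ∧ IsCouplingMatrix lam1 lam2 γ ∧
      c = matCost x1 lam1 x2 lam2 γ}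

lemma Hdist_eq [MetricSpace X] (μ1 μ2 : C(X, ℝ) → ℝ) :
    Hdist μ1 μ2 = sInf (HSet μ1 μ2) := rfl

lemma HSet_lb [MetricSpace X] (μ1 μ2 : C(X, ℝ) → ℝ) :
    ∀ c ∈ HSet μ1 μ2, 0 ≤ c := by
  rintro c ⟨n1, n2, x1, lam1, x2, lam2, γ, hr1, hr2, hcm, rfl⟩
  exact matCost_nonneg_s7 hcm hr1.1

lemma HSet_nonempty [MetricSpace X] {μ1 μ2 : C(X, ℝ) → ℝ}
    (h1 : IsFinSuppIPM μ1) (h2 : IsFinSuppIPM μ2) : (HSet μ1 μ2).Nonempty := by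
  obtain ⟨n1, x1, lam1, hr1⟩ := h1
  obtain ⟨n2, x2, lam2, hr2⟩ := h2
  exact ⟨_, n1, n2, x1, lam1, x2, lam2, _, hr1, hr2,
    prod_couplingMatrix hr1.1 hr2.1 hr1.2.2.1 hr2.2.2.1, rfl⟩

lemma withBot_coe_add_neg (a : WithBot ℝ) (b : ℝ) :
    (b : WithBot ℝ) + a + ((-b : ℝ) : WithBot ℝ) = a := by
  rw [add_comm (b : WithBot ℝ) a]; exact withBot_add_coe_neg a b

end MainAux
/-- the triangle inequality for `H`. -/
theorem stmt7 [MetricSpace X] [CompactSpace X]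
    (μ1 μ2 μ3 : C(X, ℝ) → ℝ)
    (h1 : IsFinSuppIPM μ1) (h2 : IsFinSuppIPM μ2) (h3 : IsFinSuppIPM μ3) :
    Hdist μ1 μ3 ≤ Hdist μ1 μ2 + Hdist μ2 μ3 := by
  classical
  have key : ∀ a ∈ HSet μ1 μ2, ∀ b ∈ HSet μ2 μ3, Hdist μ1 μ3 ≤ a + b := by
    rintro a ⟨n1, n2, x1, lam1, x2, lam2, γ12, hr1, hr2, hcm12, rfl⟩
    rintro b ⟨n2', n3, x2', lam2', x3, lam3, γ23, hr2', hr3, hcm23, rfl⟩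
    obtain ⟨σ, hσbij, hσx, hσl⟩ := repr_equiv hr2 hr2'
    haveI : Nonempty (Fin n1) := ⟨⟨0, hr1.1⟩⟩
    haveI : Nonempty (Fin n3) := ⟨⟨0, hr3.1⟩⟩
    set γ13 : Fin n1 → Fin n3 → WithBot ℝ := fun j l =>
      Finset.univ.sup fun k => γ12 j k + γ23 (σ k) l + ((-lam2 k : ℝ) : WithBot ℝ) with hγ13
    have hrow23 : ∀ k, (Finset.univ.sup fun l => γ23 (σ k) l) = (lam2 k : WithBot ℝ) := by
      intro k; rw [hcm23.1 (σ k), hσl k]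
    have hcm13 : IsCouplingMatrix lam1 lam3 γ13 := by
      constructor
      · intro j
        apply le_antisymm
        · apply Finset.sup_le; intro l _
          apply Finset.sup_le; intro k _
          have e1 : γ12 j k ≤ (lam1 j : WithBot ℝ) :=
            (hcm12.1 j) ▸ Finset.le_sup (f := fun k => γ12 j k) (Finset.mem_univ k)
          have e2 : γ23 (σ k) l ≤ (lam2 k : WithBot ℝ) :=
            (hrow23 k) ▸ Finset.le_sup (f := fun l => γ23 (σ k) l) (Finset.mem_univ l)
          calc γ12 j k + γ23 (σ k) l + ((-lam2 k : ℝ) : WithBot ℝ)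
              ≤ (lam1 j : WithBot ℝ) + (lam2 k : WithBot ℝ) + ((-lam2 k : ℝ) : WithBot ℝ) :=
                add_le_add (add_le_add e1 e2) le_rfl
            _ = (lam1 j : WithBot ℝ) := withBot_add_coe_neg _ _
        · rw [← hcm12.1 j]
          apply Finset.sup_le; intro k _
          obtain ⟨l₀, -, hl₀⟩ := Finset.exists_mem_eq_sup Finset.univ Finset.univ_nonempty
            (fun l => γ23 (σ k) l)
          have hval : γ23 (σ k) l₀ = (lam2 k : WithBot ℝ) := hl₀.symm.trans (hrow23 k)
          calc γ12 j k = γ12 j k + (lam2 k : WithBot ℝ) + ((-lam2 k : ℝ) : WithBot ℝ) :=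
                (withBot_add_coe_neg _ _).symm
            _ = γ12 j k + γ23 (σ k) l₀ + ((-lam2 k : ℝ) : WithBot ℝ) := by rw [hval]
            _ ≤ γ13 j l₀ :=
                Finset.le_sup (f := fun k => γ12 j k + γ23 (σ k) l₀ + ((-lam2 k : ℝ) : WithBot ℝ))
                  (Finset.mem_univ k)
            _ ≤ Finset.univ.sup fun l => γ13 j l :=
                Finset.le_sup (f := fun l => γ13 j l) (Finset.mem_univ l₀)
      · intro l
        apply le_antisymm
        · apply Finset.sup_le; intro j _
          apply Finset.sup_le; intro k _
          have e1 : γ12 j k ≤ (lam2 k : WithBot ℝ) :=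
            (hcm12.2 k) ▸ Finset.le_sup (f := fun j => γ12 j k) (Finset.mem_univ j)
          have e2 : γ23 (σ k) l ≤ (lam3 l : WithBot ℝ) :=
            (hcm23.2 l) ▸ Finset.le_sup (f := fun j' => γ23 j' l) (Finset.mem_univ (σ k))
          calc γ12 j k + γ23 (σ k) l + ((-lam2 k : ℝ) : WithBot ℝ)
              ≤ (lam2 k : WithBot ℝ) + (lam3 l : WithBot ℝ) + ((-lam2 k : ℝ) : WithBot ℝ) :=
                add_le_add (add_le_add e1 e2) le_rfl
            _ = (lam3 l : WithBot ℝ) := withBot_coe_add_neg _ _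
        · rw [← hcm23.2 l]
          apply Finset.sup_le; intro k' _
          obtain ⟨k, rfl⟩ := hσbij.2 k'
          obtain ⟨j₀, -, hj₀⟩ := Finset.exists_mem_eq_sup Finset.univ Finset.univ_nonempty
            (fun j => γ12 j k)
          have hval : γ12 j₀ k = (lam2 k : WithBot ℝ) := hj₀.symm.trans (hcm12.2 k)
          calc γ23 (σ k) l
              = (lam2 k : WithBot ℝ) + γ23 (σ k) l + ((-lam2 k : ℝ) : WithBot ℝ) :=
                (withBot_coe_add_neg _ _).symm
            _ = γ12 j₀ k + γ23 (σ k) l + ((-lam2 k : ℝ) : WithBot ℝ) := by rw [hval]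
            _ ≤ γ13 j₀ l :=
                Finset.le_sup (f := fun k => γ12 j₀ k + γ23 (σ k) l + ((-lam2 k : ℝ) : WithBot ℝ))
                  (Finset.mem_univ k)
            _ ≤ Finset.univ.sup fun j => γ13 j l :=
                Finset.le_sup (f := fun j => γ13 j l) (Finset.mem_univ j₀)
    have hcost : matCost x1 lam1 x3 lam3 γ13
        ≤ matCost x1 lam1 x2 lam2 γ12 + matCost x2' lam2' x3 lam3 γ23 := by
      apply Real.sSup_le
      · rintro c ⟨j, l, hjl, rfl⟩
        have hk : ∃ k, γ12 j k + γ23 (σ k) l + ((-lam2 k : ℝ) : WithBot ℝ) ≠ ⊥ := by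
          by_contra hc
          push_neg at hc
          exact hjl (le_antisymm (Finset.sup_le fun k _ => (hc k).le) bot_le)
        obtain ⟨k, hk⟩ := hk
        have hb1 : γ12 j k ≠ ⊥ := by intro h; simp [h] at hk
        have hb2 : γ23 (σ k) l ≠ ⊥ := by intro h; simp [h] at hk
        have e1 := entry_le_matCost (x1 := x1) (lam1 := lam1) (x2 := x2) (lam2 := lam2) hb1
        have e2 := entry_le_matCost (x1 := x2') (lam1 := lam2') (x2 := x3) (lam2 := lam3) hb2
        rw [hσx k, hσl k] at e2
        have tri1 : |lam3 l - lam1 j| ≤ |lam2 k - lam1 j| + |lam3 l - lam2 k| := by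
          have := abs_sub_le (lam3 l) (lam2 k) (lam1 j); linarith
        have tri2 := dist_triangle (x1 j) (x2 k) (x3 l)
        linarith
      · exact add_nonneg (matCost_nonneg_s7 hcm12 hr1.1) (matCost_nonneg_s7 hcm23 hr2'.1)
    have hmem : matCost x1 lam1 x3 lam3 γ13 ∈ HSet μ1 μ3 :=
      ⟨n1, n3, x1, lam1, x3, lam3, γ13, hr1, hr3, hcm13, rfl⟩
    calc Hdist μ1 μ3 ≤ matCost x1 lam1 x3 lam3 γ13 := by
          rw [Hdist_eq]; exact csInf_le ⟨0, HSet_lb μ1 μ3⟩ hmem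
      _ ≤ _ := hcost
  have hne12 : (HSet μ1 μ2).Nonempty := HSet_nonempty h1 h2
  have hne23 : (HSet μ2 μ3).Nonempty := HSet_nonempty h2 h3
  have h5 : ∀ b ∈ HSet μ2 μ3, Hdist μ1 μ3 - b ≤ sInf (HSet μ1 μ2) := fun b hb =>
    le_csInf hne12 fun a ha => by linarith [key a ha b hb]
  have h6 : Hdist μ1 μ3 - sInf (HSet μ1 μ2) ≤ sInf (HSet μ2 μ3) :=
    le_csInf hne23 fun b hb => by linarith [h5 b hb]
  rw [Hdist_eq μ1 μ2, Hdist_eq μ2 μ3]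
  linarith
end
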